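/- arXiv:2508.19054 — 2 statements merged into one kernel-verified Lean document; each statement's English description precedes it below -/
import Mathlib

section
/- (Proposition 3, first part.) Under Condition 1, for every x ∈ ℝⁿ and d ∈ ℕ, the minimum V*_d(x) := min over all length-d mode sequences 𝐢 of xᵀP_𝐢x exists (it is attained by some length-d sequence 𝐢^{d,*}), and for every d̄ ≥ d and every length-d̄ mode sequence 𝐢, V*_d(x) ≤ xᵀP_𝐢x. In particular V*_d(x) ≤ V*_{d̄}(x) whenever d̄ ≥ d. -/
open Matrix Filter
open scoped ENNReal

/-- Data of a switched linear-quadratic problem with `M` modes,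
state dimension `n` and continuous-input dimension `m`. -/
structure SwitchedLQR (n m M : ℕ) where
  A : Fin M → Matrix (Fin n) (Fin n) ℝ
  B : Fin M → Matrix (Fin n) (Fin m) ℝ
  Q : Fin M → Matrix (Fin n) (Fin n) ℝ
  R : Fin M → Matrix (Fin m) (Fin m) ℝ

namespace SwitchedLQR

variable {n m M : ℕ}

/-- Stage cost `ℓ(x,u,i) = xᵀQᵢx + uᵀRᵢu`. -/
def ell (S : SwitchedLQR n m M) (x : Fin n → ℝ) (u : Fin m → ℝ) (i : Fin M) : ℝ :=
  x ⬝ᵥ ((S.Q i) *ᵥ x) + u ⬝ᵥ ((S.R i) *ᵥ u)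

/-- Riccati operator `𝓡ᵢ(P)`. -/
noncomputable def Ric (S : SwitchedLQR n m M) (i : Fin M)
    (P : Matrix (Fin n) (Fin n) ℝ) : Matrix (Fin n) (Fin n) ℝ :=
  S.Q i + (S.A i)ᵀ * P * S.A i -
    (S.A i)ᵀ * P * S.B i * (S.R i + (S.B i)ᵀ * P * S.B i)⁻¹ * ((S.B i)ᵀ * P * S.A i)

/-- `P_𝐢 = 𝓡_{i₀}(𝓡_{i₁}(⋯𝓡_{i_{d-1}}(P̲)⋯))` for a finite mode sequence `𝐢`. -/
noncomputable def Pseq (S : SwitchedLQR n m M) (Pund : Matrix (Fin n) (Fin n) ℝ)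
    (l : List (Fin M)) : Matrix (Fin n) (Fin n) ℝ :=
  l.foldr S.Ric Pund

/-- Solution `φ(k,x,u,i)` of the switched linear system. -/
def phi (S : SwitchedLQR n m M) (x : Fin n → ℝ) (u : ℕ → Fin m → ℝ) (is : ℕ → Fin M) :
    ℕ → Fin n → ℝ
  | 0 => x
  | k + 1 => S.A (is k) *ᵥ (phi S x u is k) + S.B (is k) *ᵥ (u k)

/-- Finite-horizon cost `J_d` with terminal cost matrix `P̲`. -/
noncomputable def Jd (S : SwitchedLQR n m M) (Pund : Matrix (Fin n) (Fin n) ℝ) (d : ℕ)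
    (x : Fin n → ℝ) (u : ℕ → Fin m → ℝ) (is : ℕ → Fin M) : ℝ :=
  (∑ k ∈ Finset.range d, S.ell (S.phi x u is k) (u k) (is k)) +
    (S.phi x u is d) ⬝ᵥ (Pund *ᵥ (S.phi x u is d))

/-- Infinite-horizon cost `J(x,u,i) ∈ [0,∞]`. -/
noncomputable def Jinf (S : SwitchedLQR n m M) (x : Fin n → ℝ) (u : ℕ → Fin m → ℝ)
    (is : ℕ → Fin M) : ℝ≥0∞ :=
  ∑' k : ℕ, ENNReal.ofReal (S.ell (S.phi x u is k) (u k) (is k))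

/-- Optimal value function `V*(x)`. -/
noncomputable def Vstar (S : SwitchedLQR n m M) (x : Fin n → ℝ) : ℝ≥0∞ :=
  ⨅ (u : ℕ → Fin m → ℝ) (is : ℕ → Fin M), S.Jinf x u is

/-- `V*_d(x)`: minimum over length-`d` mode sequences `𝐢` of `xᵀP_𝐢x`. -/
noncomputable def Vd (S : SwitchedLQR n m M) (Pund : Matrix (Fin n) (Fin n) ℝ) (d : ℕ)
    (x : Fin n → ℝ) : ℝ :=
  sInf {r : ℝ | ∃ l : List (Fin M), l.length = d ∧ r = x ⬝ᵥ ((S.Pseq Pund l) *ᵥ x)}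

/-- Condition 1: the LMI block matrix is positive semi-definite for every mode. -/
def Cond1 (S : SwitchedLQR n m M) (Pund : Matrix (Fin n) (Fin n) ℝ) : Prop :=
  ∀ i : Fin M,
    (Matrix.fromBlocks
      ((S.A i)ᵀ * Pund * S.A i - Pund + S.Q i) ((S.A i)ᵀ * Pund * S.B i)
      ((S.B i)ᵀ * Pund * S.A i) (S.R i + (S.B i)ᵀ * Pund * S.B i)).PosSemidef

/-- Assumption SA1. -/
def SA1 (S : SwitchedLQR n m M) (Pbar : Matrix (Fin n) (Fin n) ℝ) : Prop :=
  Pbar.PosDef ∧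
    ∀ x : Fin n → ℝ, ∃ (u : ℕ → Fin m → ℝ) (is : ℕ → Fin M),
      S.Jinf x u is = S.Vstar x ∧ S.Vstar x ≤ ENNReal.ofReal (x ⬝ᵥ (Pbar *ᵥ x))

/-- `H*_d(x)`. -/
noncomputable def HStar (S : SwitchedLQR n m M) (Pund : Matrix (Fin n) (Fin n) ℝ) (d : ℕ)
    (x : Fin n → ℝ) : Set ((Fin m → ℝ) × Fin M) :=
  {p | S.Vd Pund d x =
        S.ell x p.1 p.2 + S.Vd Pund (d - 1) (S.A p.2 *ᵥ x + S.B p.2 *ᵥ p.1)}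

/-- `F_d(x)`. -/
noncomputable def Fd (S : SwitchedLQR n m M) (Pund : Matrix (Fin n) (Fin n) ℝ) (d : ℕ)
    (x : Fin n → ℝ) : Set (Fin n → ℝ) :=
  {y | ∃ p ∈ S.HStar Pund d x, y = S.A p.2 *ᵥ x + S.B p.2 *ᵥ p.1}

end SwitchedLQR

/-! Completing the square (a Schur complement of the block matrix of the one-step cost) shows
that `xᵀ 𝓡(P) x` is the minimum over `u` of `xᵀQx + uᵀRu + (Ax + Bu)ᵀ P (Ax + Bu)`. Hence `𝓡`
is monotone in the Loewner order, and Condition 1, which by the same Schur complement says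
`P̲ ≤ 𝓡ᵢ(P̲)`, propagates to `P̲ ≤ P_𝐢` for every `𝐢`. A sequence `𝐢` of length `d̄ ≥ d` splits as
`𝐣 ++ 𝐤` with `|𝐣| = d`, and `P_𝐢` is `P_𝐣` started from the terminal matrix `P_𝐤 ≥ P̲` instead of
`P̲`, so `P_𝐢 ≥ P_𝐣`. The minimum `V*_d` exists because there are finitely many sequences of
length `d`. -/

open scoped MatrixOrder

section Riccati

variable {ι κ : Type*} [Fintype ι]

lemma dotProduct_mulVec_le_of_le {P P' : Matrix ι ι ℝ} (h : P ≤ P') (x : ι → ℝ) :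
    x ⬝ᵥ P *ᵥ x ≤ x ⬝ᵥ P' *ᵥ x := by
  simpa only [star_trivial, sub_mulVec, dotProduct_sub, sub_nonneg] using
    (le_iff.mp h).dotProduct_mulVec_nonneg x

lemma conjTranspose_transpose_mul_mul {A : Matrix ι ι ℝ} {B : Matrix ι κ ℝ} {P : Matrix ι ι ℝ}
    (hP : P.IsHermitian) : (Aᵀ * P * B)ᴴ = Bᵀ * P * A := by
  simp [conjTranspose_eq_transpose_of_trivial, transpose_mul, (isHermitian_iff_isSymm.mp hP).eq,
    Matrix.mul_assoc]

variable [Fintype κ] (A : Matrix ι ι ℝ) (B : Matrix ι κ ℝ) (Q : Matrix ι ι ℝ) (R : Matrix κ κ ℝ)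

noncomputable def riccati [DecidableEq κ] (P : Matrix ι ι ℝ) : Matrix ι ι ℝ :=
  Q + Aᵀ * P * A - Aᵀ * P * B * (R + Bᵀ * P * B)⁻¹ * (Bᵀ * P * A)

def lqCost (P : Matrix ι ι ℝ) (x : ι → ℝ) (u : κ → ℝ) : ℝ :=
  x ⬝ᵥ Q *ᵥ x + u ⬝ᵥ R *ᵥ u + (A *ᵥ x + B *ᵥ u) ⬝ᵥ P *ᵥ (A *ᵥ x + B *ᵥ u)

lemma lqCost_eq_dotProduct_fromBlocks (P : Matrix ι ι ℝ) (x : ι → ℝ) (u : κ → ℝ) :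
    lqCost A B Q R P x u = (x ⊕ᵥ u) ⬝ᵥ
      fromBlocks (Q + Aᵀ * P * A) (Aᵀ * P * B) (Bᵀ * P * A) (R + Bᵀ * P * B) *ᵥ (x ⊕ᵥ u) := by
  simp only [lqCost, fromBlocks_mulVec, sumElim_dotProduct_sumElim, Sum.elim_comp_inl,
    Sum.elim_comp_inr, dotProduct_mulVec, vecMul_add, add_vecMul, dotProduct_add, add_dotProduct]
  simp only [← vecMul_transpose, vecMul_vecMul, Matrix.mul_assoc]
  abel

lemma lqCost_nonneg (hQ : Q.PosSemidef) (hR : R.PosSemidef) {P : Matrix ι ι ℝ}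
    (hP : P.PosSemidef) (x : ι → ℝ) (u : κ → ℝ) : 0 ≤ lqCost A B Q R P x u := by
  have hx := hQ.dotProduct_mulVec_nonneg x
  have hu := hR.dotProduct_mulVec_nonneg u
  have hy := hP.dotProduct_mulVec_nonneg (A *ᵥ x + B *ᵥ u)
  simp only [star_trivial] at hx hu hy
  unfold lqCost
  linarith

lemma lqCost_mono {P P' : Matrix ι ι ℝ} (h : P ≤ P') (x : ι → ℝ) (u : κ → ℝ) :
    lqCost A B Q R P x u ≤ lqCost A B Q R P' x u := by
  simpa only [lqCost, add_le_add_iff_left] using dotProduct_mulVec_le_of_le h _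

variable {A B Q R}

lemma posDef_add_transpose_mul_mul (hR : R.PosDef) {P : Matrix ι ι ℝ} (hP : P.PosSemidef) :
    (R + Bᵀ * P * B).PosDef :=
  hR.add_posSemidef (by simpa [conjTranspose_eq_transpose_of_trivial] using
    hP.conjTranspose_mul_mul_same B)

variable [DecidableEq κ]

lemma isHermitian_riccati (hQ : Q.IsHermitian) (hR : R.IsHermitian) {P : Matrix ι ι ℝ}
    (hP : P.IsHermitian) : (riccati A B Q R P).IsHermitian := by
  have hΛ : (R + Bᵀ * P * B).IsHermitian := hR.add (isHermitian_conjTranspose_mul_mul B hP)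
  rw [riccati, ← conjTranspose_transpose_mul_mul (A := A) (B := B) hP]
  exact (hQ.add (isHermitian_conjTranspose_mul_mul A hP)).sub
    (isHermitian_mul_mul_conjTranspose _ hΛ.inv)

lemma lqCost_eq_add_riccati {P : Matrix ι ι ℝ} (hP : P.IsHermitian) (hR : R.IsHermitian)
    [Invertible (R + Bᵀ * P * B)] (x : ι → ℝ) (u : κ → ℝ) :
    lqCost A B Q R P x u
      = (((R + Bᵀ * P * B)⁻¹ * (Bᵀ * P * A)) *ᵥ x + u) ⬝ᵥ (R + Bᵀ * P * B) *ᵥ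
          (((R + Bᵀ * P * B)⁻¹ * (Bᵀ * P * A)) *ᵥ x + u) + x ⬝ᵥ riccati A B Q R P *ᵥ x := by
  have hΛ : (R + Bᵀ * P * B).IsHermitian := hR.add (isHermitian_conjTranspose_mul_mul B hP)
  have h := schur_complement_eq₂₂ (Q + Aᵀ * P * A) (Aᵀ * P * B) x u hΛ
  simp only [star_trivial, conjTranspose_transpose_mul_mul hP, ← dotProduct_mulVec] at h
  rw [riccati, lqCost_eq_dotProduct_fromBlocks, h]

lemma riccati_dotProduct_le_lqCost (hR : R.PosDef) {P : Matrix ι ι ℝ} (hP : P.PosSemidef)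
    (x : ι → ℝ) (u : κ → ℝ) : x ⬝ᵥ riccati A B Q R P *ᵥ x ≤ lqCost A B Q R P x u := by
  have hΛ := posDef_add_transpose_mul_mul (B := B) hR hP
  have := hΛ.isUnit.invertible
  rw [lqCost_eq_add_riccati hP.isHermitian hR.isHermitian]
  exact le_add_of_nonneg_left (by
    simpa only [star_trivial] using hΛ.posSemidef.dotProduct_mulVec_nonneg _)

lemma exists_lqCost_eq_riccati_dotProduct (hR : R.PosDef) {P : Matrix ι ι ℝ}
    (hP : P.PosSemidef) (x : ι → ℝ) :
    ∃ u, lqCost A B Q R P x u = x ⬝ᵥ riccati A B Q R P *ᵥ x := by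
  have := (posDef_add_transpose_mul_mul (B := B) hR hP).isUnit.invertible
  refine ⟨-(((R + Bᵀ * P * B)⁻¹ * (Bᵀ * P * A)) *ᵥ x), ?_⟩
  rw [lqCost_eq_add_riccati hP.isHermitian hR.isHermitian]
  simp

lemma riccati_posSemidef (hQ : Q.PosSemidef) (hR : R.PosDef) {P : Matrix ι ι ℝ}
    (hP : P.PosSemidef) : (riccati A B Q R P).PosSemidef := by
  refine .of_dotProduct_mulVec_nonneg
    (isHermitian_riccati hQ.isHermitian hR.isHermitian hP.isHermitian) fun x => ?_
  obtain ⟨u, hu⟩ := exists_lqCost_eq_riccati_dotProduct (A := A) (B := B) (Q := Q) hR hP x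
  simpa [← hu] using lqCost_nonneg A B Q R hQ hR.posSemidef hP x u

lemma riccati_mono (hQ : Q.IsHermitian) (hR : R.PosDef) {P P' : Matrix ι ι ℝ}
    (hP : P.PosSemidef) (h : P ≤ P') : riccati A B Q R P ≤ riccati A B Q R P' := by
  have hP' : P'.PosSemidef := by simpa using hP.add (le_iff.mp h)
  refine le_iff.mpr (.of_dotProduct_mulVec_nonneg ((isHermitian_riccati hQ hR.isHermitian
    hP'.isHermitian).sub (isHermitian_riccati hQ hR.isHermitian hP.isHermitian)) fun x => ?_)
  obtain ⟨u, hu⟩ := exists_lqCost_eq_riccati_dotProduct (A := A) (B := B) (Q := Q) hR hP' x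
  have := riccati_dotProduct_le_lqCost (A := A) (B := B) (Q := Q) hR hP x u
  have := lqCost_mono A B Q R h x u
  simp only [star_trivial, sub_mulVec, dotProduct_sub, sub_nonneg]
  linarith

lemma le_riccati_of_posSemidef_fromBlocks (hR : R.PosDef) {P : Matrix ι ι ℝ}
    (hP : P.PosSemidef)
    (hC : (fromBlocks (Aᵀ * P * A - P + Q) (Aᵀ * P * B) (Bᵀ * P * A)
      (R + Bᵀ * P * B)).PosSemidef) :
    P ≤ riccati A B Q R P := by
  have hΛ := posDef_add_transpose_mul_mul (B := B) hR hP
  have := hΛ.isUnit.invertible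
  have hBA : Bᵀ * P * A = (Aᵀ * P * B)ᴴ := (conjTranspose_transpose_mul_mul hP.isHermitian).symm
  rw [hBA, PosDef.fromBlocks₂₂ _ _ hΛ, ← hBA] at hC
  have hsub : riccati A B Q R P - P
      = Aᵀ * P * A - P + Q - Aᵀ * P * B * (R + Bᵀ * P * B)⁻¹ * (Bᵀ * P * A) := by
    rw [riccati]; abel
  rw [le_iff, hsub]
  exact hC

end Riccati

namespace SwitchedLQR

variable {n m M : ℕ} (S : SwitchedLQR n m M)

lemma Pseq_append (P : Matrix (Fin n) (Fin n) ℝ) (l₁ l₂ : List (Fin M)) :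
    S.Pseq P (l₁ ++ l₂) = S.Pseq (S.Pseq P l₂) l₁ :=
  List.foldr_append

variable {S}

lemma Pseq_posSemidef (hQ : ∀ i, (S.Q i).PosSemidef) (hR : ∀ i, (S.R i).PosDef)
    {P : Matrix (Fin n) (Fin n) ℝ} (hP : P.PosSemidef) (l : List (Fin M)) :
    (S.Pseq P l).PosSemidef := by
  induction l with
  | nil => exact hP
  | cons i l ih => exact riccati_posSemidef (hQ i) (hR i) ih

lemma Pseq_mono (hQ : ∀ i, (S.Q i).PosSemidef) (hR : ∀ i, (S.R i).PosDef)
    {P P' : Matrix (Fin n) (Fin n) ℝ} (hP : P.PosSemidef) (h : P ≤ P') (l : List (Fin M)) :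
    S.Pseq P l ≤ S.Pseq P' l := by
  induction l with
  | nil => exact h
  | cons i l ih =>
    exact riccati_mono (hQ i).isHermitian (hR i) (Pseq_posSemidef hQ hR hP l) ih

lemma le_Pseq (hQ : ∀ i, (S.Q i).PosSemidef) (hR : ∀ i, (S.R i).PosDef)
    {P : Matrix (Fin n) (Fin n) ℝ} (hP : P.PosSemidef) (hC : S.Cond1 P) (l : List (Fin M)) :
    P ≤ S.Pseq P l := by
  induction l with
  | nil => exact le_rfl
  | cons i l ih =>
    exact (le_riccati_of_posSemidef_fromBlocks (hR i) hP (hC i)).trans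
      (riccati_mono (hQ i).isHermitian (hR i) hP ih)

lemma Pseq_take_le (hQ : ∀ i, (S.Q i).PosSemidef) (hR : ∀ i, (S.R i).PosDef)
    {P : Matrix (Fin n) (Fin n) ℝ} (hP : P.PosSemidef) (hC : S.Cond1 P) (l : List (Fin M))
    (d : ℕ) : S.Pseq P (l.take d) ≤ S.Pseq P l := by
  conv_rhs => rw [← List.take_append_drop d l, Pseq_append]
  exact Pseq_mono hQ hR hP (le_Pseq hQ hR hP hC _) _

variable (S)

lemma finite_Pseq_values (P : Matrix (Fin n) (Fin n) ℝ) (d : ℕ) (x : Fin n → ℝ) :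
    {r : ℝ | ∃ l : List (Fin M), l.length = d ∧ r = x ⬝ᵥ S.Pseq P l *ᵥ x}.Finite :=
  ((List.finite_length_eq (Fin M) d).image fun l => x ⬝ᵥ S.Pseq P l *ᵥ x).subset
    (by rintro _ ⟨l, hl, rfl⟩; exact ⟨l, hl, rfl⟩)

lemma exists_Vd_eq (hM : 0 < M) (P : Matrix (Fin n) (Fin n) ℝ) (d : ℕ) (x : Fin n → ℝ) :
    ∃ s : List (Fin M), s.length = d ∧ S.Vd P d x = x ⬝ᵥ S.Pseq P s *ᵥ x := by
  refine (Set.Nonempty.csInf_mem ?_ (S.finite_Pseq_values P d x) :)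
  exact ⟨_, List.replicate d ⟨0, hM⟩, List.length_replicate, rfl⟩

lemma Vd_le (P : Matrix (Fin n) (Fin n) ℝ) (l : List (Fin M)) (x : Fin n → ℝ) :
    S.Vd P l.length x ≤ x ⬝ᵥ S.Pseq P l *ᵥ x :=
  csInf_le (S.finite_Pseq_values P _ x).bddBelow ⟨l, rfl, rfl⟩

end SwitchedLQR

theorem stmt7_general {n m M : ℕ} (hM : 0 < M)
    (S : SwitchedLQR n m M)
    (hQ : ∀ i : Fin M, (S.Q i).PosDef) (hR : ∀ i : Fin M, (S.R i).PosDef)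
    (Pund : Matrix (Fin n) (Fin n) ℝ) (hPund : Pund.PosSemidef)
    (hC : S.Cond1 Pund) (x : Fin n → ℝ) (d : ℕ) :
    (∃ s : List (Fin M), s.length = d ∧
      S.Vd Pund d x = x ⬝ᵥ ((S.Pseq Pund s) *ᵥ x)) ∧
    (∀ (dbar : ℕ), d ≤ dbar → ∀ l : List (Fin M), l.length = dbar →
      S.Vd Pund d x ≤ x ⬝ᵥ ((S.Pseq Pund l) *ᵥ x)) ∧
    (∀ dbar : ℕ, d ≤ dbar → S.Vd Pund d x ≤ S.Vd Pund dbar x) := by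
  have hQ' : ∀ i, (S.Q i).PosSemidef := fun i => (hQ i).posSemidef
  have hle : ∀ dbar, d ≤ dbar → ∀ l : List (Fin M), l.length = dbar →
      S.Vd Pund d x ≤ x ⬝ᵥ ((S.Pseq Pund l) *ᵥ x) := by
    rintro dbar hd l rfl
    calc S.Vd Pund d x = S.Vd Pund (l.take d).length x := by rw [List.length_take_of_le hd]
      _ ≤ x ⬝ᵥ S.Pseq Pund (l.take d) *ᵥ x := S.Vd_le Pund _ x
      _ ≤ x ⬝ᵥ S.Pseq Pund l *ᵥ x :=
        dotProduct_mulVec_le_of_le (SwitchedLQR.Pseq_take_le hQ' hR hPund hC l d) x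
  refine ⟨S.exists_Vd_eq hM Pund d x, hle, fun dbar hd => ?_⟩
  obtain ⟨s, hs, hVd⟩ := S.exists_Vd_eq hM Pund dbar x
  exact hVd ▸ hle dbar hd s hs

/-- Proposition 3, first part: under Condition 1, for every `x`
and `d`, the minimum `V*_d(x)` over length-`d` mode sequences exists (attained by
some `𝐢^{d,*}`), and `V*_d(x) ≤ xᵀP_𝐢x` for every sequence `𝐢` of length `d̄ ≥ d`;
in particular `V*_d(x) ≤ V*_{d̄}(x)` for `d̄ ≥ d`. -/
theorem stmt7 {n m M : ℕ} (hn : 0 < n) (hm : 0 < m) (hM : 0 < M)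
    (S : SwitchedLQR n m M)
    (hQ : ∀ i : Fin M, (S.Q i).PosDef) (hR : ∀ i : Fin M, (S.R i).PosDef)
    (Pund : Matrix (Fin n) (Fin n) ℝ) (hPund : Pund.PosSemidef)
    (hC : S.Cond1 Pund) (x : Fin n → ℝ) (d : ℕ) :
    (∃ s : List (Fin M), s.length = d ∧
      S.Vd Pund d x = x ⬝ᵥ ((S.Pseq Pund s) *ᵥ x)) ∧
    (∀ (dbar : ℕ), d ≤ dbar → ∀ l : List (Fin M), l.length = dbar →
      S.Vd Pund d x ≤ x ⬝ᵥ ((S.Pseq Pund l) *ᵥ x)) ∧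
    (∀ dbar : ℕ, d ≤ dbar → S.Vd Pund d x ≤ S.Vd Pund dbar x) :=
  stmt7_general hM S hQ hR Pund hPund hC x d
end

section
/- (Terminal error bound along a finite-horizon optimal trajectory, eq. (25) of Theorem 1's proof.) Under Condition 1 and Assumption SA1, let α ∈ (0,1) satisfy αP̄ ⪯ Q_i for all i ∈ 𝕄 and α₀ > 0 satisfy α₀(P̄ − P̲) ⪯ Q_i for all i ∈ 𝕄. Let d ≥ 1, x_0 = x ∈ ℝⁿ, and for k = 0,…,d−2 let (u_k,i_k) ∈ H*_{d−k}(x_k) and x_{k+1} := A_{i_k}x_k + B_{i_k}u_k. Then min over i ∈ 𝕄 of x_{d−1}ᵀQ_ix_{d−1} ≤ (1−α)^{d−1}·V*_d(x), and consequently V*(x_{d−1}) − x_{d−1}ᵀP̲x_{d−1} ≤ ((1−α)^{d−1}/α₀)·V*_d(x). -/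
open Matrix Filter
open scoped ENNReal

/-!
Along an `H*`-trajectory every step pays the stage cost
`ℓ(x_k,u_k,i_k) ≥ x_kᵀQx_k ≥ α x_kᵀP̄x_k ≥ α V*_{d-k}(x_k)`, so the remaining finite-horizon
value shrinks by the factor `1 - α` per step, and at the last state
`V*_1(y) = min_i yᵀ𝓡_i(P̲)y ≥ min_i yᵀQ_iy`. The bound `V*_d(x) ≤ xᵀP̄x` behind the first step
comes from SA1: along an optimal infinite trajectory the costs `J_N` with terminal weight `P̲`
increase with `N` (Condition 1 makes `P̲` a control-Lyapunov matrix) and their terminal terms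
vanish, so `V*_d(x) ≤ J_d ≤ lim J_N ≤ V*(x) ≤ xᵀP̄x`. The second inequality follows from the
first together with `α₀ (yᵀP̄y - yᵀP̲y) ≤ min_i yᵀQ_iy` and `V*(y) ≤ yᵀP̄y`.
-/

open Topology

namespace Matrix
variable {ι κ : Type*} [Fintype ι]

lemma PosSemidef.dotProduct_mulVec_self_nonneg {P : Matrix ι ι ℝ} (hP : P.PosSemidef)
    (x : ι → ℝ) : 0 ≤ x ⬝ᵥ (P *ᵥ x) := by
  simpa using hP.dotProduct_mulVec_nonneg x

lemma dotProduct_mulVec_le_of_posSemidef_sub {P Q : Matrix ι ι ℝ} (h : (Q - P).PosSemidef)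
    (x : ι → ℝ) : x ⬝ᵥ (P *ᵥ x) ≤ x ⬝ᵥ (Q *ᵥ x) := by
  have := h.dotProduct_mulVec_self_nonneg x
  rwa [sub_mulVec, dotProduct_sub, sub_nonneg] at this

section Riccati
variable (A : Matrix ι ι ℝ) (B : Matrix ι κ ℝ) (R : Matrix κ κ ℝ) (P : Matrix ι ι ℝ)

/-- `𝓡(P) - Q` is the Schur complement of the lower-right block of this matrix, whose quadratic
form at `(x, u)` is `uᵀRu + (Ax + Bu)ᵀP(Ax + Bu)`. -/
def riccatiBlock : Matrix (ι ⊕ κ) (ι ⊕ κ) ℝ :=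
  fromBlocks (Aᵀ * P * A) (Aᵀ * P * B) (Bᵀ * P * A) (R + Bᵀ * P * B)

noncomputable def riccatiSchur [Fintype κ] [DecidableEq κ] : Matrix ι ι ℝ :=
  Aᵀ * P * A - Aᵀ * P * B * (R + Bᵀ * P * B)⁻¹ * (Bᵀ * P * A)

variable {A B R P}

lemma IsHermitian.conjTranspose_transpose_mul_mul (hP : P.IsHermitian) :
    (Aᵀ * P * B)ᴴ = Bᵀ * P * A := by
  rw [conjTranspose_mul, conjTranspose_mul, hP.eq, conjTranspose_eq_transpose_of_trivial,
    conjTranspose_eq_transpose_of_trivial, transpose_transpose, Matrix.mul_assoc]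

lemma riccatiBlock_eq_fromBlocks (hP : P.IsHermitian) :
    riccatiBlock A B R P =
      fromBlocks (Aᵀ * P * A) (Aᵀ * P * B) (Aᵀ * P * B)ᴴ (R + Bᵀ * P * B) := by
  rw [hP.conjTranspose_transpose_mul_mul, riccatiBlock]

variable [Fintype κ]

lemma sumElim_dotProduct_fromBlocks_mulVec (A : Matrix ι ι ℝ) (B : Matrix ι κ ℝ)
    (C : Matrix κ ι ℝ) (D : Matrix κ κ ℝ) (x : ι → ℝ) (y : κ → ℝ) :
    Sum.elim x y ⬝ᵥ (fromBlocks A B C D *ᵥ Sum.elim x y) =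
      x ⬝ᵥ (A *ᵥ x) + x ⬝ᵥ (B *ᵥ y) + y ⬝ᵥ (C *ᵥ x) + y ⬝ᵥ (D *ᵥ y) := by
  rw [fromBlocks_mulVec, sumElim_dotProduct_sumElim]
  simp only [Sum.elim_comp_inl, Sum.elim_comp_inr, dotProduct_add]
  ring

lemma dotProduct_add_mulVec_add (A : Matrix ι ι ℝ) (B : Matrix ι κ ℝ) (P : Matrix ι ι ℝ)
    (x : ι → ℝ) (u : κ → ℝ) :
    (A *ᵥ x + B *ᵥ u) ⬝ᵥ (P *ᵥ (A *ᵥ x + B *ᵥ u)) =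
      x ⬝ᵥ ((Aᵀ * P * A) *ᵥ x) + x ⬝ᵥ ((Aᵀ * P * B) *ᵥ u) +
        u ⬝ᵥ ((Bᵀ * P * A) *ᵥ x) + u ⬝ᵥ ((Bᵀ * P * B) *ᵥ u) := by
  simp only [← mulVec_mulVec, dotProduct_mulVec _ _ (P *ᵥ _), vecMul_transpose, mulVec_add,
    dotProduct_add, add_dotProduct]
  ring

lemma sumElim_dotProduct_riccatiBlock_mulVec (x : ι → ℝ) (u : κ → ℝ) :
    Sum.elim x u ⬝ᵥ (riccatiBlock A B R P *ᵥ Sum.elim x u) =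
      u ⬝ᵥ (R *ᵥ u) + (A *ᵥ x + B *ᵥ u) ⬝ᵥ (P *ᵥ (A *ᵥ x + B *ᵥ u)) := by
  rw [riccatiBlock, sumElim_dotProduct_fromBlocks_mulVec, dotProduct_add_mulVec_add, add_mulVec,
    dotProduct_add]
  ring

lemma riccatiBlock_posSemidef (hR : R.PosSemidef) (hP : P.PosSemidef) :
    (riccatiBlock A B R P).PosSemidef := by
  refine .of_dotProduct_mulVec_nonneg ?_ fun v => ?_
  · rw [riccatiBlock_eq_fromBlocks hP.isHermitian, isHermitian_fromBlocks_iff]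
    exact ⟨isHermitian_conjTranspose_mul_mul A hP.isHermitian, rfl, conjTranspose_conjTranspose _,
      hR.isHermitian.add (isHermitian_conjTranspose_mul_mul B hP.isHermitian)⟩
  · rw [star_trivial, ← Sum.elim_comp_inl_inr v, sumElim_dotProduct_riccatiBlock_mulVec]
    exact add_nonneg (hR.dotProduct_mulVec_self_nonneg _) (hP.dotProduct_mulVec_self_nonneg _)

lemma PosDef.add_transpose_mul_mul (hR : R.PosDef) (hP : P.PosSemidef) :
    (R + Bᵀ * P * B).PosDef :=
  hR.add_posSemidef (by simpa using hP.conjTranspose_mul_mul_same B)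

variable [DecidableEq κ]

lemma riccatiSchur_posSemidef (hR : R.PosDef) (hP : P.PosSemidef) :
    (riccatiSchur A B R P).PosSemidef := by
  have hD := hR.add_transpose_mul_mul hP (B := B)
  have := hD.isUnit.invertible
  have h := riccatiBlock_posSemidef (A := A) (B := B) hR.posSemidef hP
  rwa [riccatiBlock_eq_fromBlocks hP.isHermitian, PosDef.fromBlocks₂₂ _ _ hD,
    hP.isHermitian.conjTranspose_transpose_mul_mul] at h

lemma dotProduct_riccatiSchur_mulVec_le (hR : R.PosDef) (hP : P.PosSemidef) (x : ι → ℝ)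
    (u : κ → ℝ) :
    x ⬝ᵥ (riccatiSchur A B R P *ᵥ x) ≤
      u ⬝ᵥ (R *ᵥ u) + (A *ᵥ x + B *ᵥ u) ⬝ᵥ (P *ᵥ (A *ᵥ x + B *ᵥ u)) := by
  have hD := hR.add_transpose_mul_mul hP (B := B)
  have := hD.isUnit.invertible
  have h := schur_complement_eq₂₂ (Aᵀ * P * A) (Aᵀ * P * B) x u hD.isHermitian
  rw [← riccatiBlock_eq_fromBlocks hP.isHermitian] at h
  simp only [star_trivial, ← dotProduct_mulVec, sumElim_dotProduct_riccatiBlock_mulVec,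
    hP.isHermitian.conjTranspose_transpose_mul_mul] at h
  rw [riccatiSchur, h]
  exact le_add_of_nonneg_left (hD.posSemidef.dotProduct_mulVec_self_nonneg _)

end Riccati

lemma smul_dotProduct_mulVec_smul (P : Matrix ι ι ℝ) (c : ℝ) (y : ι → ℝ) :
    (c • y) ⬝ᵥ (P *ᵥ (c • y)) = c ^ 2 * (y ⬝ᵥ (P *ᵥ y)) := by
  rw [mulVec_smul, dotProduct_smul, smul_dotProduct, smul_eq_mul, smul_eq_mul]
  ring

lemma PosDef.exists_dotProduct_mulVec_le_mul {Q : Matrix ι ι ℝ} (hQ : Q.PosDef)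
    (P : Matrix ι ι ℝ) : ∃ C, ∀ y, y ⬝ᵥ (P *ᵥ y) ≤ C * (y ⬝ᵥ (Q *ᵥ y)) := by
  have hpos : ∀ y ≠ 0, 0 < y ⬝ᵥ (Q *ᵥ y) := fun y hy => by
    simpa using hQ.dotProduct_mulVec_pos hy
  have hsphere : ∀ z ∈ Metric.sphere (0 : ι → ℝ) 1, z ≠ 0 := fun z hz =>
    ne_zero_of_mem_sphere one_ne_zero ⟨z, hz⟩
  obtain ⟨C, hC⟩ := (isCompact_sphere (0 : ι → ℝ) 1).exists_bound_of_continuousOn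
    (f := fun y => y ⬝ᵥ (P *ᵥ y) / y ⬝ᵥ (Q *ᵥ y))
    (ContinuousOn.div (by fun_prop) (by fun_prop) fun z hz => (hpos z (hsphere z hz)).ne')
  refine ⟨C, fun y => ?_⟩
  rcases eq_or_ne y 0 with rfl | hy
  · simp
  set z := ‖y‖⁻¹ • y
  have hz : z ∈ Metric.sphere (0 : ι → ℝ) 1 := by simp [z, norm_smul, hy]
  have hyz : y = ‖y‖ • z := by simp [z, smul_smul, hy]
  have hbound : z ⬝ᵥ (P *ᵥ z) ≤ C * (z ⬝ᵥ (Q *ᵥ z)) :=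
    (div_le_iff₀ (hpos z (hsphere z hz))).1 (le_of_abs_le (hC z hz))
  have hPy := smul_dotProduct_mulVec_smul P ‖y‖ z
  have hQy := smul_dotProduct_mulVec_smul Q ‖y‖ z
  rw [← hyz] at hPy hQy
  rw [hPy, hQy, mul_left_comm]
  exact mul_le_mul_of_nonneg_left hbound (sq_nonneg _)

end Matrix

namespace SwitchedLQR
variable {n m M : ℕ} (S : SwitchedLQR n m M) {P : Matrix (Fin n) (Fin n) ℝ}

lemma ric_eq_add_riccatiSchur (i : Fin M) (P : Matrix (Fin n) (Fin n) ℝ) :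
    S.Ric i P = S.Q i + riccatiSchur (S.A i) (S.B i) (S.R i) P :=
  add_sub_assoc _ _ _

variable {S}

lemma ell_nonneg {i : Fin M} (hQ : (S.Q i).PosSemidef) (hR : (S.R i).PosSemidef)
    (x : Fin n → ℝ) (u : Fin m → ℝ) : 0 ≤ S.ell x u i :=
  add_nonneg (hQ.dotProduct_mulVec_self_nonneg x) (hR.dotProduct_mulVec_self_nonneg u)

lemma dotProduct_Q_le_ric {i : Fin M} (hR : (S.R i).PosDef) (hP : P.PosSemidef)
    (x : Fin n → ℝ) : x ⬝ᵥ (S.Q i *ᵥ x) ≤ x ⬝ᵥ (S.Ric i P *ᵥ x) := by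
  rw [ric_eq_add_riccatiSchur, add_mulVec, dotProduct_add]
  exact le_add_of_nonneg_right ((riccatiSchur_posSemidef hR hP).dotProduct_mulVec_self_nonneg x)

lemma dotProduct_ric_le_ell_add {i : Fin M} (hR : (S.R i).PosDef) (hP : P.PosSemidef)
    (x : Fin n → ℝ) (u : Fin m → ℝ) :
    x ⬝ᵥ (S.Ric i P *ᵥ x) ≤
      S.ell x u i + (S.A i *ᵥ x + S.B i *ᵥ u) ⬝ᵥ (P *ᵥ (S.A i *ᵥ x + S.B i *ᵥ u)) := by
  have := dotProduct_riccatiSchur_mulVec_le (A := S.A i) (B := S.B i) hR hP x u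
  rw [ric_eq_add_riccatiSchur, add_mulVec, dotProduct_add, ell]
  linarith

lemma pseq_posSemidef (hQ : ∀ i, (S.Q i).PosSemidef) (hR : ∀ i, (S.R i).PosDef)
    (hP : P.PosSemidef) (l : List (Fin M)) : (S.Pseq P l).PosSemidef := by
  induction l with
  | nil => exact hP
  | cons i l ih =>
    rw [Pseq, List.foldr_cons, ← Pseq, ric_eq_add_riccatiSchur]
    exact (hQ i).add (riccatiSchur_posSemidef (hR i) ih)

lemma dotProduct_le_ell_add_of_cond1 (hC : S.Cond1 P) (x : Fin n → ℝ) (u : Fin m → ℝ)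
    (i : Fin M) :
    x ⬝ᵥ (P *ᵥ x) ≤
      S.ell x u i + (S.A i *ᵥ x + S.B i *ᵥ u) ⬝ᵥ (P *ᵥ (S.A i *ᵥ x + S.B i *ᵥ u)) := by
  have h := (hC i).dotProduct_mulVec_self_nonneg (Sum.elim x u)
  rw [sumElim_dotProduct_fromBlocks_mulVec] at h
  simp only [add_mulVec, sub_mulVec, dotProduct_add, dotProduct_sub] at h
  rw [dotProduct_add_mulVec_add, ell]
  linarith

lemma vd_set_finite (P : Matrix (Fin n) (Fin n) ℝ) (d : ℕ) (x : Fin n → ℝ) :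
    {r : ℝ | ∃ l : List (Fin M), l.length = d ∧ r = x ⬝ᵥ (S.Pseq P l *ᵥ x)}.Finite :=
  ((List.finite_length_eq (Fin M) d).image fun l => x ⬝ᵥ (S.Pseq P l *ᵥ x)).subset
    (by rintro _ ⟨l, hl, rfl⟩; exact ⟨l, hl, rfl⟩)

lemma vd_le {d : ℕ} (x : Fin n → ℝ) {l : List (Fin M)} (hl : l.length = d) :
    S.Vd P d x ≤ x ⬝ᵥ (S.Pseq P l *ᵥ x) :=
  csInf_le (vd_set_finite P d x).bddBelow ⟨l, hl, rfl⟩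

lemma exists_vd_eq [Nonempty (Fin M)] (P : Matrix (Fin n) (Fin n) ℝ) (d : ℕ) (x : Fin n → ℝ) :
    ∃ l : List (Fin M), l.length = d ∧ S.Vd P d x = x ⬝ᵥ (S.Pseq P l *ᵥ x) := by
  refine Set.Nonempty.csInf_mem ?_ (vd_set_finite P d x)
  exact ⟨_, List.replicate d (Classical.arbitrary _), List.length_replicate, rfl⟩

lemma iInf_le_vd_one [Nonempty (Fin M)] (hR : ∀ i, (S.R i).PosDef) (hP : P.PosSemidef)
    (x : Fin n → ℝ) : ⨅ i, x ⬝ᵥ (S.Q i *ᵥ x) ≤ S.Vd P 1 x := by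
  obtain ⟨l, hl, hVd⟩ := S.exists_vd_eq P 1 x
  obtain ⟨i, rfl⟩ := List.length_eq_one_iff.1 hl
  rw [hVd]
  exact (ciInf_le (Set.finite_range _).bddBelow i).trans (dotProduct_Q_le_ric (hR i) hP x)

lemma phi_succ_eq_shift (x : Fin n → ℝ) (u : ℕ → Fin m → ℝ) (is : ℕ → Fin M) (k : ℕ) :
    S.phi x u is (k + 1) =
      S.phi (S.A (is 0) *ᵥ x + S.B (is 0) *ᵥ u 0) (fun j => u (j + 1)) (fun j => is (j + 1)) k := by
  induction k with
  | zero => rfl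
  | succ k ih => rw [phi, ih]; rfl

lemma jd_succ (P : Matrix (Fin n) (Fin n) ℝ) (d : ℕ) (x : Fin n → ℝ) (u : ℕ → Fin m → ℝ)
    (is : ℕ → Fin M) :
    S.Jd P (d + 1) x u is = S.ell x (u 0) (is 0) +
      S.Jd P d (S.A (is 0) *ᵥ x + S.B (is 0) *ᵥ u 0) (fun j => u (j + 1))
        (fun j => is (j + 1)) := by
  simp only [Jd, Finset.sum_range_succ', phi_succ_eq_shift]
  rw [phi]
  ring

lemma dotProduct_pseq_ofFn_le_jd (hQ : ∀ i, (S.Q i).PosSemidef) (hR : ∀ i, (S.R i).PosDef)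
    (hP : P.PosSemidef) (d : ℕ) (x : Fin n → ℝ) (u : ℕ → Fin m → ℝ) (is : ℕ → Fin M) :
    x ⬝ᵥ (S.Pseq P (List.ofFn fun k : Fin d => is k) *ᵥ x) ≤ S.Jd P d x u is := by
  induction d generalizing x u is with
  | zero => simp [Pseq, Jd, phi]
  | succ d ih =>
    have hnext := ih (S.A (is 0) *ᵥ x + S.B (is 0) *ᵥ u 0) (fun j => u (j + 1))
      (fun j => is (j + 1))
    have hric := dotProduct_ric_le_ell_add (hR (is 0)) (pseq_posSemidef hQ hR hP
      (List.ofFn fun k : Fin d => is (k + 1))) x (u 0)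
    simp only [List.ofFn_succ, Fin.val_zero, Fin.val_succ, Pseq, List.foldr_cons] at hnext hric ⊢
    rw [jd_succ]
    linarith

lemma vd_le_jd (hQ : ∀ i, (S.Q i).PosSemidef) (hR : ∀ i, (S.R i).PosDef) (hP : P.PosSemidef)
    (d : ℕ) (x : Fin n → ℝ) (u : ℕ → Fin m → ℝ) (is : ℕ → Fin M) :
    S.Vd P d x ≤ S.Jd P d x u is :=
  (vd_le x (List.length_ofFn)).trans (dotProduct_pseq_ofFn_le_jd hQ hR hP d x u is)

lemma jd_mono (hC : S.Cond1 P) (x : Fin n → ℝ) (u : ℕ → Fin m → ℝ) (is : ℕ → Fin M) :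
    Monotone fun d => S.Jd P d x u is := by
  refine monotone_nat_of_le_succ fun d => ?_
  have := dotProduct_le_ell_add_of_cond1 hC (S.phi x u is d) (u d) (is d)
  simp only [Jd, Finset.sum_range_succ, phi]
  linarith

lemma tendsto_dotProduct_phi_of_tendsto_ell (hQ : ∀ i, (S.Q i).PosDef)
    (hR : ∀ i, (S.R i).PosSemidef) (hP : P.PosSemidef) {x : Fin n → ℝ} {u : ℕ → Fin m → ℝ}
    {is : ℕ → Fin M} (h : Tendsto (fun k => S.ell (S.phi x u is k) (u k) (is k)) atTop (𝓝 0)) :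
    Tendsto (fun k => S.phi x u is k ⬝ᵥ (P *ᵥ S.phi x u is k)) atTop (𝓝 0) := by
  choose C hC using fun i => (hQ i).exists_dotProduct_mulVec_le_mul P
  have hC₀ : ∀ i, C i ≤ ∑ j, |C j| := fun i =>
    (le_abs_self _).trans (Finset.single_le_sum (fun j _ => abs_nonneg (C j)) (Finset.mem_univ i))
  refine squeeze_zero (fun k => hP.dotProduct_mulVec_self_nonneg _) (fun k => ?_)
    (by simpa using h.const_mul (∑ j, |C j|))
  have hQk := (hQ (is k)).posSemidef.dotProduct_mulVec_self_nonneg (S.phi x u is k)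
  have hRk := (hR (is k)).dotProduct_mulVec_self_nonneg (u k)
  calc _ ≤ C (is k) * (S.phi x u is k ⬝ᵥ (S.Q (is k) *ᵥ S.phi x u is k)) := hC _ _
    _ ≤ (∑ j, |C j|) * (S.phi x u is k ⬝ᵥ (S.Q (is k) *ᵥ S.phi x u is k)) := by gcongr; exact hC₀ _
    _ ≤ (∑ j, |C j|) * S.ell (S.phi x u is k) (u k) (is k) := by
      gcongr
      exact le_add_of_nonneg_right hRk

lemma sum_ell_le_of_jinf_le (hQ : ∀ i, (S.Q i).PosSemidef) (hR : ∀ i, (S.R i).PosSemidef)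
    {x : Fin n → ℝ} {u : ℕ → Fin m → ℝ} {is : ℕ → Fin M} {r : ℝ} (hr : 0 ≤ r)
    (h : S.Jinf x u is ≤ ENNReal.ofReal r) (N : ℕ) :
    ∑ k ∈ Finset.range N, S.ell (S.phi x u is k) (u k) (is k) ≤ r := by
  rw [← ENNReal.ofReal_le_ofReal_iff hr,
    ENNReal.ofReal_sum_of_nonneg fun k _ => ell_nonneg (hQ _) (hR _) _ _]
  exact (ENNReal.sum_le_tsum _).trans h

lemma vd_le_of_jinf_le (hQ : ∀ i, (S.Q i).PosDef) (hR : ∀ i, (S.R i).PosDef)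
    (hP : P.PosSemidef) (hC : S.Cond1 P) {x : Fin n → ℝ} {u : ℕ → Fin m → ℝ}
    {is : ℕ → Fin M} {r : ℝ} (hr : 0 ≤ r) (h : S.Jinf x u is ≤ ENNReal.ofReal r) (d : ℕ) :
    S.Vd P d x ≤ r := by
  have hQ' := fun i => (hQ i).posSemidef
  have hR' := fun i => (hR i).posSemidef
  have hsum := sum_ell_le_of_jinf_le hQ' hR' hr h
  have hℓ := (summable_of_sum_range_le (fun k => ell_nonneg (hQ' _) (hR' _) _ _)
    hsum).tendsto_atTop_zero
  have hT := tendsto_dotProduct_phi_of_tendsto_ell hQ hR' hP hℓ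
  refine ge_of_tendsto (by simpa using hT.const_add r) (eventually_atTop.2 ⟨d, fun N hN => ?_⟩)
  calc S.Vd P d x ≤ S.Jd P d x u is := vd_le_jd hQ' hR hP d x u is
    _ ≤ S.Jd P N x u is := jd_mono hC x u is hN
    _ ≤ r + S.phi x u is N ⬝ᵥ (P *ᵥ S.phi x u is N) := add_le_add_left (hsum N) _

lemma vd_le_of_SA1 (hQ : ∀ i, (S.Q i).PosDef) (hR : ∀ i, (S.R i).PosDef)
    (hP : P.PosSemidef) (hC : S.Cond1 P) {Pbar : Matrix (Fin n) (Fin n) ℝ} (hSA : S.SA1 Pbar)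
    (d : ℕ) (x : Fin n → ℝ) : S.Vd P d x ≤ x ⬝ᵥ (Pbar *ᵥ x) := by
  obtain ⟨u, is, hJ, hV⟩ := hSA.2 x
  exact vd_le_of_jinf_le hQ hR hP hC (hSA.1.posSemidef.dotProduct_mulVec_self_nonneg x)
    (hJ.trans_le hV) d

lemma toReal_vstar_le_of_SA1 {Pbar : Matrix (Fin n) (Fin n) ℝ} (hSA : S.SA1 Pbar)
    (x : Fin n → ℝ) : (S.Vstar x).toReal ≤ x ⬝ᵥ (Pbar *ᵥ x) := by
  obtain ⟨-, -, -, hV⟩ := hSA.2 x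
  exact ENNReal.toReal_le_of_le_ofReal (hSA.1.posSemidef.dotProduct_mulVec_self_nonneg x) hV

lemma vd_sub_one_le_of_mem_hStar {α : ℝ} (hα : 0 ≤ α) {Pbar : Matrix (Fin n) (Fin n) ℝ}
    {d : ℕ} {y : Fin n → ℝ} {p : (Fin m → ℝ) × Fin M} (hR : (S.R p.2).PosSemidef)
    (hαQ : (S.Q p.2 - α • Pbar).PosSemidef) (hV : S.Vd P d y ≤ y ⬝ᵥ (Pbar *ᵥ y))
    (hp : p ∈ S.HStar P d y) :
    S.Vd P (d - 1) (S.A p.2 *ᵥ y + S.B p.2 *ᵥ p.1) ≤ (1 - α) * S.Vd P d y := by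
  have hQy := dotProduct_mulVec_le_of_posSemidef_sub hαQ y
  rw [smul_mulVec, dotProduct_smul, smul_eq_mul] at hQy
  have hRu := hR.dotProduct_mulVec_self_nonneg p.1
  have hVd : S.Vd P d y = S.ell y p.1 p.2 + _ := hp
  rw [ell] at hVd
  linarith [mul_le_mul_of_nonneg_left hV hα]

lemma vd_le_pow_mul_of_mem_hStar {α : ℝ} (hα0 : 0 ≤ α) (hα1 : α ≤ 1)
    {Pbar : Matrix (Fin n) (Fin n) ℝ} (hR : ∀ i, (S.R i).PosSemidef)
    (hαQ : ∀ i, (S.Q i - α • Pbar).PosSemidef) (hV : ∀ d y, S.Vd P d y ≤ y ⬝ᵥ (Pbar *ᵥ y))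
    {d : ℕ} {xs : ℕ → Fin n → ℝ} {us : ℕ → Fin m → ℝ} {iss : ℕ → Fin M}
    (hstep : ∀ k : ℕ, k + 2 ≤ d →
      (us k, iss k) ∈ S.HStar P (d - k) (xs k) ∧
      xs (k + 1) = S.A (iss k) *ᵥ (xs k) + S.B (iss k) *ᵥ (us k)) :
    ∀ k, k + 1 ≤ d → S.Vd P (d - k) (xs k) ≤ (1 - α) ^ k * S.Vd P d (xs 0) := by
  intro k
  induction k with
  | zero => simp
  | succ k ih =>
    intro hk
    obtain ⟨hmem, hxs⟩ := hstep k (by omega)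
    have hcontract := vd_sub_one_le_of_mem_hStar hα0 (hR _) (hαQ _) (hV _ _) hmem
    rw [← hxs, show d - k - 1 = d - (k + 1) by omega] at hcontract
    calc _ ≤ (1 - α) * S.Vd P (d - k) (xs k) := hcontract
      _ ≤ (1 - α) * ((1 - α) ^ k * S.Vd P d (xs 0)) :=
        mul_le_mul_of_nonneg_left (ih (by omega)) (by linarith)
      _ = (1 - α) ^ (k + 1) * S.Vd P d (xs 0) := by ring

end SwitchedLQR

open SwitchedLQR

theorem stmt13_general {n m M : ℕ} (hM : 0 < M)
    (S : SwitchedLQR n m M)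
    (hQ : ∀ i : Fin M, (S.Q i).PosDef) (hR : ∀ i : Fin M, (S.R i).PosDef)
    (Pund : Matrix (Fin n) (Fin n) ℝ) (hPund : Pund.PosSemidef)
    (hC : S.Cond1 Pund)
    (Pbar : Matrix (Fin n) (Fin n) ℝ) (hSA : S.SA1 Pbar)
    (α : ℝ) (hα0 : 0 < α) (hα1 : α < 1)
    (hαQ : ∀ i : Fin M, (S.Q i - α • Pbar).PosSemidef)
    (α₀ : ℝ) (hα₀ : 0 < α₀)
    (hα₀Q : ∀ i : Fin M, (S.Q i - α₀ • (Pbar - Pund)).PosSemidef)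
    (d : ℕ) (hd : 1 ≤ d) (x : Fin n → ℝ)
    (xs : ℕ → Fin n → ℝ) (us : ℕ → Fin m → ℝ) (iss : ℕ → Fin M)
    (hx0 : xs 0 = x)
    (hstep : ∀ k : ℕ, k + 2 ≤ d →
      (us k, iss k) ∈ S.HStar Pund (d - k) (xs k) ∧
      xs (k + 1) = S.A (iss k) *ᵥ (xs k) + S.B (iss k) *ᵥ (us k)) :
    (⨅ i : Fin M, (xs (d - 1)) ⬝ᵥ ((S.Q i) *ᵥ (xs (d - 1)))) ≤
        (1 - α) ^ (d - 1) * S.Vd Pund d x ∧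
    (S.Vstar (xs (d - 1))).toReal - (xs (d - 1)) ⬝ᵥ (Pund *ᵥ (xs (d - 1))) ≤
        (1 - α) ^ (d - 1) / α₀ * S.Vd Pund d x := by
  have : Nonempty (Fin M) := ⟨⟨0, hM⟩⟩
  have hV := vd_le_of_SA1 hQ hR hPund hC hSA
  have hdecay := vd_le_pow_mul_of_mem_hStar hα0.le hα1.le (fun i => (hR i).posSemidef) hαQ hV
    hstep (d - 1) (by omega)
  rw [Nat.sub_sub_self hd, hx0] at hdecay
  have hQmin := (iInf_le_vd_one hR hPund (xs (d - 1))).trans hdecay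
  refine ⟨hQmin, ?_⟩
  set y := xs (d - 1)
  have hgap : α₀ * (y ⬝ᵥ (Pbar *ᵥ y) - y ⬝ᵥ (Pund *ᵥ y)) ≤ ⨅ i, y ⬝ᵥ (S.Q i *ᵥ y) :=
    le_ciInf fun i => by
      simpa [smul_mulVec, sub_mulVec, dotProduct_sub] using
        dotProduct_mulVec_le_of_posSemidef_sub (hα₀Q i) y
  have hVstar := toReal_vstar_le_of_SA1 hSA y
  rw [div_mul_eq_mul_div, le_div_iff₀ hα₀]
  linarith [mul_le_mul_of_nonneg_left hVstar hα₀.le]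

/-- terminal error bound along a finite-horizon optimal trajectory,
eq. (25): under Condition 1 and SA1, with `α,α₀` as in eq. (8), along a
trajectory generated by `(u_k,i_k) ∈ H*_{d-k}(x_k)` for `k = 0,…,d-2`,
`min_i x_{d-1}ᵀQᵢx_{d-1} ≤ (1-α)^{d-1}·V*_d(x)` and
`V*(x_{d-1}) - x_{d-1}ᵀP̲x_{d-1} ≤ ((1-α)^{d-1}/α₀)·V*_d(x)`. -/
theorem stmt13 {n m M : ℕ} (hn : 0 < n) (hm : 0 < m) (hM : 0 < M)
    (S : SwitchedLQR n m M)
    (hQ : ∀ i : Fin M, (S.Q i).PosDef) (hR : ∀ i : Fin M, (S.R i).PosDef)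
    (Pund : Matrix (Fin n) (Fin n) ℝ) (hPund : Pund.PosSemidef)
    (hC : S.Cond1 Pund)
    (Pbar : Matrix (Fin n) (Fin n) ℝ) (hSA : S.SA1 Pbar)
    (α : ℝ) (hα0 : 0 < α) (hα1 : α < 1)
    (hαQ : ∀ i : Fin M, (S.Q i - α • Pbar).PosSemidef)
    (α₀ : ℝ) (hα₀ : 0 < α₀)
    (hα₀Q : ∀ i : Fin M, (S.Q i - α₀ • (Pbar - Pund)).PosSemidef)
    (d : ℕ) (hd : 1 ≤ d) (x : Fin n → ℝ)
    (xs : ℕ → Fin n → ℝ) (us : ℕ → Fin m → ℝ) (iss : ℕ → Fin M)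
    (hx0 : xs 0 = x)
    (hstep : ∀ k : ℕ, k + 2 ≤ d →
      (us k, iss k) ∈ S.HStar Pund (d - k) (xs k) ∧
      xs (k + 1) = S.A (iss k) *ᵥ (xs k) + S.B (iss k) *ᵥ (us k)) :
    (⨅ i : Fin M, (xs (d - 1)) ⬝ᵥ ((S.Q i) *ᵥ (xs (d - 1)))) ≤
        (1 - α) ^ (d - 1) * S.Vd Pund d x ∧
    (S.Vstar (xs (d - 1))).toReal - (xs (d - 1)) ⬝ᵥ (Pund *ᵥ (xs (d - 1))) ≤
        (1 - α) ^ (d - 1) / α₀ * S.Vd Pund d x :=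
  stmt13_general hM S hQ hR Pund hPund hC Pbar hSA α hα0 hα1 hαQ α₀ hα₀ hα₀Q d hd x xs us iss hx0
    hstep
end
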